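/- arXiv:1610.08167 — 3 statements merged into one kernel-verified Lean document; each statement's English description precedes it below -/
import Mathlib

section
/- The family H_xor(n, m, 3) of affine maps over 𝔽₂, given by z ↦ b₀ ⊕ A·z where b₀ ∈ 𝔽₂^m and A ∈ 𝔽₂^{m×n} are chosen uniformly at random, is strongly 3-universal: for any three distinct keys z₁, z₂, z₃ ∈ 𝔽₂^n and any values v₁, v₂, v₃ ∈ 𝔽₂^m, the probability that h(zᵢ) = vᵢ for i = 1,2,3 equals 2^{-3m}. -/
/-!
The map `(b, A) ↦ (b + A zᵢ)ᵢ` is linear in `(b, A)`. It is surjective: three distinct points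
of `𝔽₂ⁿ` are affinely independent, since a line over `𝔽₂` has only two points, and prescribed
values at affinely independent points are always attained by some affine map `z ↦ b + A z`.
All fibres of a surjective additive map between finite groups have the same size, so each
fibre has probability `1 / |𝔽₂^{3m}| = 2^{-3m}`.
-/

open Finset

theorem AddMonoidHom.card_fiber_div_card_of_surjective {G M F : Type*} [AddGroup G] [Fintype G]
    [AddMonoid M] [Fintype M] [DecidableEq M] [FunLike F G M] [AddMonoidHomClass F G M]
    (f : F) (hf : Function.Surjective f) (y : M) :
    (#{g | f g = y} : ℝ) / Fintype.card G = (Fintype.card M : ℝ)⁻¹ := by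
  have hfib : ∀ x, #{g | f g = x} = #{g | f g = y} := fun x =>
    AddMonoidHom.card_fiber_eq_of_mem_range f (hf x) (hf y)
  have hcard : Fintype.card G = Fintype.card M * #{g | f g = y} := by
    rw [← card_univ, card_eq_sum_card_fiberwise (fun g _ => mem_univ (f g)),
      sum_congr rfl fun x _ => hfib x, sum_const, card_univ, smul_eq_mul]
  have hpos : 0 < #{g | f g = y} := by
    obtain ⟨g, rfl⟩ := hf y
    exact card_pos.mpr ⟨g, by simp⟩
  rw [hcard]
  push_cast
  field_simp

theorem LinearIndependent.exists_linearMap_apply_eq {ι K V W : Type*} [DivisionRing K]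
    [AddCommGroup V] [Module K V] [AddCommGroup W] [Module K W] {u : ι → V}
    (hu : LinearIndependent K u) (w : ι → W) : ∃ g : V →ₗ[K] W, ∀ i, g (u i) = w i := by
  obtain ⟨h, hh⟩ := (Finsupp.linearCombination K u).exists_leftInverse_of_injective
    (LinearMap.ker_eq_bot.mpr hu)
  refine ⟨Finsupp.linearCombination K w ∘ₗ h, fun i => ?_⟩
  have hi : h (u i) = Finsupp.single i 1 := by
    simpa using LinearMap.congr_fun hh (Finsupp.single i 1)
  simp [hi]

theorem AffineIndependent.exists_affineMap_apply_eq {ι K V W : Type*} [DivisionRing K]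
    [AddCommGroup V] [Module K V] [AddCommGroup W] [Module K W] {p : ι → V}
    (hp : AffineIndependent K p) (w : ι → W) : ∃ f : V →ᵃ[K] W, ∀ i, f (p i) = w i := by
  classical
  rcases isEmpty_or_nonempty ι with _ | ⟨⟨i₀⟩⟩
  · exact ⟨AffineMap.const K V 0, isEmptyElim⟩
  obtain ⟨g, hg⟩ := ((affineIndependent_iff_linearIndependent_vsub K p i₀).mp hp)
    |>.exists_linearMap_apply_eq fun i => w i - w i₀
  refine ⟨g.toAffineMap + AffineMap.const K V (w i₀ - g (p i₀)), fun i => ?_⟩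
  simp only [AffineMap.coe_add, Pi.add_apply, LinearMap.coe_toAffineMap, AffineMap.const_apply]
  by_cases hi : i = i₀
  · subst hi; abel
  · have hgi : g (p i - p i₀) = w i - w i₀ := hg ⟨i, hi⟩
    calc g (p i) + (w i₀ - g (p i₀)) = w i₀ + g (p i - p i₀) := by rw [map_sub]; abel
      _ = w i := by rw [hgi]; abel

theorem affineIndependent_zmod_two_of_injective {V P : Type*} [AddCommGroup V]
    [Module (ZMod 2) V] [AddTorsor V P] {p : Fin 3 → P} (hp : Function.Injective p) :
    AffineIndependent (ZMod 2) p := by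
  rw [affineIndependent_iff_not_collinear, collinear_iff_exists_forall_eq_smul_vadd]
  rintro ⟨p₀, v, hv⟩
  choose r hr using fun i => hv (p i) ⟨i, rfl⟩
  obtain ⟨i, j, hij, hrij⟩ := Fintype.exists_ne_map_eq_of_card_lt r (by simp)
  exact hij (hp (by rw [hr i, hr j, hrij]))

section affineEval

variable {K ι : Type*} [Field K] {m n : ℕ}

def affineEval (z : ι → Fin n → K) :
    (Fin m → K) × Matrix (Fin m) (Fin n) K →ₗ[K] ι → Fin m → K where
  toFun bA i := bA.1 + bA.2.mulVec (z i)
  map_add' x y := by ext; simp [Matrix.add_mulVec]; abel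
  map_smul' c x := by ext; simp [Matrix.smul_mulVec, mul_add]

theorem affineEval_surjective {z : ι → Fin n → K} (hz : AffineIndependent K z) :
    Function.Surjective (affineEval (m := m) z) := by
  intro y
  obtain ⟨f, hf⟩ := hz.exists_affineMap_apply_eq y
  refine ⟨(f 0, LinearMap.toMatrix' f.linear), funext fun i => ?_⟩
  change f 0 + (LinearMap.toMatrix' f.linear).mulVec (z i) = y i
  rw [LinearMap.toMatrix'_mulVec, ← hf i, add_comm, ← vadd_eq_add,
    ← f.map_vadd, vadd_eq_add, add_zero]

end affineEval

/-- The family H_xor(n,m,3) of random affine maps over 𝔽₂ is strongly 3-universal. -/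
theorem stmt_3 (n m : ℕ)
    (z : Fin 3 → (Fin n → ZMod 2)) (hz : Function.Injective z)
    (v : Fin 3 → (Fin m → ZMod 2)) :
    ((Finset.univ.filter
        (fun bA : (Fin m → ZMod 2) × Matrix (Fin m) (Fin n) (ZMod 2) =>
          ∀ i : Fin 3, bA.1 + bA.2.mulVec (z i) = v i)).card : ℝ)
      / (Finset.univ : Finset ((Fin m → ZMod 2) × Matrix (Fin m) (Fin n) (ZMod 2))).card
      = (2 : ℝ) ^ (-(3 * m : ℤ)) := by
  have hsurj := affineEval_surjective (m := m) (affineIndependent_zmod_two_of_injective hz)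
  have hfiber : univ.filter (fun bA : (Fin m → ZMod 2) × Matrix (Fin m) (Fin n) (ZMod 2) =>
      ∀ i, bA.1 + bA.2.mulVec (z i) = v i) = univ.filter (fun bA => affineEval z bA = v) :=
    filter_congr fun bA _ => funext_iff.symm
  rw [hfiber, card_univ, AddMonoidHom.card_fiber_div_card_of_surjective (affineEval z) hsurj v]
  simp only [Fintype.card_pi, Fintype.card_fin, ZMod.card, prod_const, card_univ]
  rw [zpow_neg, ← pow_mul, mul_comm]
  norm_cast
end

section
/- For any real p ∈ [0, 1/2) and natural number n, the probability of obtaining at least ⌈n/2⌉ heads in n independent tosses of a coin with heads-probability p satisfies: Σ_{k=⌈n/2⌉}^{n} C(n,k) · p^k · (1-p)^{n-k} ≤ ((1-p)/(1-2p)) · (√(4·p·(1-p)))^n. -/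
/-!
Bound each binomial coefficient by `2 ^ n`. What remains, `∑_{k ≥ m} p ^ k q ^ (n - k)` with
`q = 1 - p` and `m = ⌈n/2⌉`, is `q ^ n` times a tail of the geometric series in `r = p / q < 1`,
hence at most `q ^ n r ^ m / (1 - r)`; since `2m ≥ n` and `r ≤ 1`, `r ^ m ≤ (√r) ^ n`, and
`2 q √r = √(4pq)`.
-/

open Finset

theorem sum_Icc_pow_mul_pow_sub_le {K : Type*} [Field K] [LinearOrder K] [IsStrictOrderedRing K]
    {p q : K} (hp : 0 ≤ p) (hpq : p < q) (m n : ℕ) :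
    ∑ k ∈ Icc m n, p ^ k * q ^ (n - k) ≤ q ^ n * ((p / q) ^ m / (1 - p / q)) := by
  have hq : 0 < q := hp.trans_lt hpq
  have hterm : ∀ k ∈ Icc m n, p ^ k * q ^ (n - k) = q ^ n * (p / q) ^ k := by
    intro k hk
    rw [div_pow, pow_sub₀ q hq.ne' (mem_Icc.1 hk).2]
    field_simp
  rw [sum_congr rfl hterm, ← mul_sum, ← Ico_add_one_right_eq_Icc]
  gcongr
  exact geom_sum_Ico_le_of_lt_one (div_nonneg hp hq.le) ((div_lt_one hq).2 hpq)

theorem pow_le_sqrt_pow {r : ℝ} (hr0 : 0 ≤ r) (hr1 : r ≤ 1) {m n : ℕ} (hnm : n ≤ 2 * m) :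
    r ^ m ≤ √r ^ n := by
  calc r ^ m = √r ^ (2 * m) := by rw [pow_mul, Real.sq_sqrt hr0]
    _ ≤ √r ^ n := pow_le_pow_of_le_one (Real.sqrt_nonneg r) (Real.sqrt_le_one.2 hr1) hnm

/-- Binomial upper-tail bound: probability of at least ⌈n/2⌉ heads. -/
theorem stmt_5 (p : ℝ) (hp0 : 0 ≤ p) (hp : p < 1 / 2) (n : ℕ) :
    ∑ k ∈ Finset.Icc ((n + 1) / 2) n, (n.choose k : ℝ) * p ^ k * (1 - p) ^ (n - k)
      ≤ ((1 - p) / (1 - 2 * p)) * (Real.sqrt (4 * p * (1 - p))) ^ n := by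
  set q := 1 - p
  set r := p / q with hr
  have hq : 0 < q := by linarith
  have hr0 : 0 ≤ r := div_nonneg hp0 hq.le
  have hr1 : r ≤ 1 := (div_le_one hq).2 (by linarith)
  have hsqrt : √(4 * p * q) = 2 * q * √r := by
    rw [show 4 * p * q = (2 * q) ^ 2 * r by rw [hr]; field_simp; ring,
      Real.sqrt_mul (by positivity), Real.sqrt_sq (by positivity)]
  have h1r : 1 - r = (1 - 2 * p) / q := by rw [hr]; field_simp; ring
  calc ∑ k ∈ Icc ((n + 1) / 2) n, (n.choose k : ℝ) * p ^ k * q ^ (n - k)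
      ≤ ∑ k ∈ Icc ((n + 1) / 2) n, 2 ^ n * (p ^ k * q ^ (n - k)) := by
        refine sum_le_sum fun k _ => ?_
        rw [← mul_assoc]
        gcongr
        exact_mod_cast Nat.choose_le_two_pow n k
    _ ≤ 2 ^ n * (q ^ n * (r ^ ((n + 1) / 2) / (1 - r))) := by
        rw [← mul_sum]
        gcongr
        exact sum_Icc_pow_mul_pow_sub_le hp0 (by linarith) _ _
    _ ≤ 2 ^ n * (q ^ n * (√r ^ n / (1 - r))) := by
        have h1r_pos : 0 < 1 - r := by rw [h1r]; exact div_pos (by linarith) hq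
        gcongr
        exact pow_le_sqrt_pow hr0 hr1 (by omega)
    _ = (q / (1 - 2 * p)) * √(4 * p * q) ^ n := by
        rw [hsqrt, h1r, mul_pow, mul_pow]
        field_simp
end

section
/- Let ε ∈ (0,1], r ≥ 1 a natural number, and pivot := ⌈2·r·(1+ε)·e^{1/3}/ε²⌉. Then for any positive integer N (the model count), ⌈log₂((1+ε)·N/pivot)⌉ ≤ ⌊log₂(N·ε²/(r·e^{1/3}))⌋; in particular, whenever the right-hand side is nonnegative there exists a natural number m' with ⌈log₂((1+ε)·N/pivot)⌉ ≤ m' ≤ ⌊log₂(N·ε²/(r·e^{1/3}))⌋. -/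
open Real

/-
With `x = (1+ε)N/pivot` and `y = Nε²/(r e^{1/3})`, the choice of `pivot` gives `2x ≤ y`, i.e.
`log₂ x + 1 ≤ log₂ y`. Since `⌈t⌉ ≤ ⌊t⌋ + 1 = ⌊t + 1⌋`, this yields `⌈log₂ x⌉ ≤ ⌊log₂ y⌋`.
-/

theorem ceil_logb_le_floor_logb_of_mul_le {b x y : ℝ} (hb : 1 < b) (hx : 0 < x)
    (hxy : b * x ≤ y) : ⌈logb b x⌉ ≤ ⌊logb b y⌋ := by
  have hlog : logb b x + 1 ≤ logb b y := by
    have h := logb_le_logb_of_le hb (by positivity) hxy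
    rwa [logb_mul (by positivity) hx.ne', logb_self_eq_one hb, add_comm] at h
  calc ⌈logb b x⌉ ≤ ⌊logb b x⌋ + 1 := Int.ceil_le_floor_add_one _
    _ = ⌊logb b x + 1⌋ := (Int.floor_add_one _).symm
    _ ≤ ⌊logb b y⌋ := Int.floor_le_floor hlog

theorem Int.exists_nat_between {a b : ℤ} (hab : a ≤ b) (hb : 0 ≤ b) :
    ∃ m : ℕ, a ≤ m ∧ (m : ℤ) ≤ b :=
  ⟨b.toNat, by omega, by omega⟩

theorem two_mul_div_le_of_pivot_le {ε r N p : ℝ} (hε : 0 < ε) (hr : 0 < r) (hN : 0 ≤ N)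
    (hp : 2 * r * (1 + ε) * exp (1 / 3) / ε ^ 2 ≤ p) :
    2 * ((1 + ε) * N / p) ≤ N * ε ^ 2 / (r * exp (1 / 3)) :=
  calc 2 * ((1 + ε) * N / p) ≤ 2 * ((1 + ε) * N / (2 * r * (1 + ε) * exp (1 / 3) / ε ^ 2)) := by
        gcongr
    _ = N * ε ^ 2 / (r * exp (1 / 3)) := by field_simp

theorem stmt_8_general (ε : ℝ) (hε0 : 0 < ε) (r : ℕ) (hr : 1 ≤ r) (N : ℕ) (hN : 0 < N)
    (pivot : ℤ) (hpivot : pivot = ⌈2 * r * (1 + ε) * Real.exp (1 / 3) / ε ^ 2⌉) :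
    (⌈Real.logb 2 ((1 + ε) * N / pivot)⌉ ≤ ⌊Real.logb 2 (N * ε ^ 2 / (r * Real.exp (1 / 3)))⌋)
    ∧ (0 ≤ ⌊Real.logb 2 (N * ε ^ 2 / (r * Real.exp (1 / 3)))⌋ →
        ∃ m' : ℕ, ⌈Real.logb 2 ((1 + ε) * N / pivot)⌉ ≤ (m' : ℤ)
          ∧ (m' : ℤ) ≤ ⌊Real.logb 2 (N * ε ^ 2 / (r * Real.exp (1 / 3)))⌋) := by
  have hr0 : (0 : ℝ) < r := by exact_mod_cast hr
  have hN0 : (0 : ℝ) < N := by exact_mod_cast hN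
  have hp : 2 * r * (1 + ε) * exp (1 / 3) / ε ^ 2 ≤ (pivot : ℝ) := hpivot ▸ Int.le_ceil _
  have hp0 : (0 : ℝ) < pivot := lt_of_lt_of_le (by positivity) hp
  have hbounds := ceil_logb_le_floor_logb_of_mul_le one_lt_two (by positivity)
    (two_mul_div_le_of_pivot_le hε0 hr0 hN0.le hp)
  exact ⟨hbounds, Int.exists_nat_between hbounds⟩

/-- Existence of a good bucket-count m': compatibility of the ceiling lower
bound with the floor upper bound, for pivot := ⌈2r(1+ε)e^{1/3}/ε²⌉. -/
theorem stmt_8 (ε : ℝ) (hε0 : 0 < ε) (hε1 : ε ≤ 1) (r : ℕ) (hr : 1 ≤ r) (N : ℕ) (hN : 0 < N)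
    (pivot : ℤ) (hpivot : pivot = ⌈2 * r * (1 + ε) * Real.exp (1 / 3) / ε ^ 2⌉) :
    (⌈Real.logb 2 ((1 + ε) * N / pivot)⌉ ≤ ⌊Real.logb 2 (N * ε ^ 2 / (r * Real.exp (1 / 3)))⌋)
    ∧ (0 ≤ ⌊Real.logb 2 (N * ε ^ 2 / (r * Real.exp (1 / 3)))⌋ →
        ∃ m' : ℕ, ⌈Real.logb 2 ((1 + ε) * N / pivot)⌉ ≤ (m' : ℤ)
          ∧ (m' : ℤ) ≤ ⌊Real.logb 2 (N * ε ^ 2 / (r * Real.exp (1 / 3)))⌋) :=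
  stmt_8_general ε hε0 r hr N hN pivot hpivot
end
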